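/- arXiv:2010.08878 — 5 statements merged into one kernel-verified Lean document; each statement's English description precedes it below -/
import Mathlib

section
/- Let G be a finite simple graph with vertex set V(G) = {x_1, …, x_n} and let v = x_1 x_2 ⋯ x_n ∈ S. Then for every integer k ≥ 2, the colon ideal (J(G)^{(k)} : v) equals J(G)^{(k-2)}, where J(G)^{(0)} is the unit ideal S. -/
open MvPolynomial

/-- `C` is a vertex cover of `G`: every edge is incident to a vertex of `C`. -/
def IsVertexCover {V : Type*} (G : SimpleGraph V) (C : Set V) : Prop :=
  ∀ ⦃a b : V⦄, G.Adj a b → a ∈ C ∨ b ∈ C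

/-- `C` is a minimal vertex cover of `G`. -/
def IsMinVertexCover {V : Type*} (G : SimpleGraph V) (C : Set V) : Prop :=
  IsVertexCover G C ∧ ∀ D : Set V, D ⊂ C → ¬ IsVertexCover G D

/-- `A` is an independent set of `G`. -/
def IsIndepSet {V : Type*} (G : SimpleGraph V) (A : Set V) : Prop :=
  ∀ ⦃a⦄, a ∈ A → ∀ ⦃b⦄, b ∈ A → ¬ G.Adj a b

/-- `A` is a maximal independent set of `G`. -/
def IsMaxIndepSet {V : Type*} (G : SimpleGraph V) (A : Set V) : Prop :=
  IsIndepSet G A ∧ ∀ B : Set V, IsIndepSet G B → A ⊆ B → A = B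

/-- A graph is unmixed if all maximal independent sets have the same cardinality. -/
def Unmixed {V : Type*} (G : SimpleGraph V) : Prop :=
  ∀ A B : Set V, IsMaxIndepSet G A → IsMaxIndepSet G B → A.ncard = B.ncard

/-- `G` has no isolated vertices. -/
def HasNoIsolatedVertex {V : Type*} (G : SimpleGraph V) : Prop :=
  ∀ v : V, ∃ w : V, G.Adj v w

/-- `G` is very well-covered: no isolated vertices, an even number of vertices, and every
maximal independent set has cardinality half the number of vertices. -/
def VeryWellCovered {V : Type*} [Fintype V] (G : SimpleGraph V) : Prop :=
  HasNoIsolatedVertex G ∧ Even (Fintype.card V) ∧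
    ∀ A : Set V, IsMaxIndepSet G A → 2 * A.ncard = Fintype.card V

/-- `G` is claw-free: it has no induced subgraph isomorphic to `K_{1,3}`. -/
def ClawFree {V : Type*} (G : SimpleGraph V) : Prop :=
  ¬ ∃ a b c d : V, G.Adj a b ∧ G.Adj a c ∧ G.Adj a d ∧
      ¬ G.Adj b c ∧ ¬ G.Adj b d ∧ ¬ G.Adj c d ∧ b ≠ c ∧ b ≠ d ∧ c ≠ d

/-- The graph obtained from `G` by deleting the vertices in `A`: it has the same vertex set,
and its edges are the edges of `G` avoiding `A` (so the vertices of `A` become isolated). -/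
def deleteVerts {V : Type*} (G : SimpleGraph V) (A : Set V) : SimpleGraph V where
  Adj a b := G.Adj a b ∧ a ∉ A ∧ b ∉ A
  symm := ⟨fun a b ⟨h1, h2, h3⟩ => ⟨h1.symm, h3, h2⟩⟩
  loopless := ⟨fun a h => G.loopless.irrefl a h.1⟩

/-- The closed neighborhood `N_G[F]` of a set of vertices `F`. -/
def closedNbhdSet {V : Type*} (G : SimpleGraph V) (F : Set V) : Set V :=
  ⋃ a ∈ F, insert a (G.neighborSet a)

/-- The cover ideal `J(G)` of the graph `G`:
the intersection of the ideals `(x_i, x_j)` over the edges `{x_i, x_j}` of `G`. -/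
noncomputable def coverIdeal (K : Type*) [Field K] {V : Type*} (G : SimpleGraph V) :
    Ideal (MvPolynomial V K) :=
  ⨅ (p : V × V) (_ : G.Adj p.1 p.2), Ideal.span {X p.1, X p.2}

/-- The `k`-th symbolic power `J(G)^{(k)}` of the cover ideal of `G`:
the intersection of the ideals `(x_i, x_j)^k` over the edges `{x_i, x_j}` of `G`
(the empty intersection being the unit ideal). -/
noncomputable def symbPow (K : Type*) [Field K] {V : Type*} (G : SimpleGraph V) (k : ℕ) :
    Ideal (MvPolynomial V K) :=
  ⨅ (p : V × V) (_ : G.Adj p.1 p.2), Ideal.span {X p.1, X p.2} ^ k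

/-- The degree of a monomial with exponent vector `m`. -/
def mdeg {V : Type*} (m : V →₀ ℕ) : ℕ := m.sum fun _ e => e

/-- The monomial with exponent vector `m` is a minimal monomial generator of `I`. -/
def IsMinGen {K : Type*} [Field K] {V : Type*} (I : Ideal (MvPolynomial V K)) (m : V →₀ ℕ) :
    Prop :=
  (monomial m (1 : K)) ∈ I ∧
    ∀ i : V, m i ≠ 0 → (monomial (m - Finsupp.single i 1) (1 : K)) ∉ I

/-- `deg I`: the maximum degree of a minimal monomial generator of `I`. -/
noncomputable def genDeg {K : Type*} [Field K] {V : Type*} (I : Ideal (MvPolynomial V K)) : ℕ :=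
  sSup {d : ℕ | ∃ m : V →₀ ℕ, IsMinGen I m ∧ mdeg m = d}

/-! For `a ≠ b`, a polynomial lies in `(x_a, x_b)^k` exactly when every monomial of its support
has degree at least `k` in `x_a, x_b`. Multiplying by `v = x_1 ⋯ x_n` shifts every exponent vector
by `(1, …, 1)`, which raises that degree by exactly 2; hence, edge by edge,
`f v ∈ (x_a, x_b)^k ↔ f ∈ (x_a, x_b)^(k - 2)`. -/

namespace MvPolynomial

variable {σ R : Type*} [CommSemiring R] {a b : σ} {k : ℕ} {f : MvPolynomial σ R}

theorem one_le_add_of_mem_span_X_pair (hf : f ∈ Ideal.span {X a, X b}) :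
    ∀ m ∈ f.support, 1 ≤ m a + m b := by
  rw [← Set.image_pair, mem_ideal_span_X_image] at hf
  intro m hm
  obtain ⟨i, hi, hmi⟩ := hf m hm
  rcases hi with rfl | rfl <;> omega

theorem le_add_of_mem_span_X_pair_pow (hf : f ∈ Ideal.span {X a, X b} ^ k) :
    ∀ m ∈ f.support, k ≤ m a + m b := by
  classical
  induction k generalizing f with
  | zero => intros; omega
  | succ k ih =>
    rw [pow_succ] at hf
    refine Submodule.mul_induction_on hf (fun g hg h hh m hm => ?_) fun g h hg hh m hm => ?_
    · obtain ⟨y, hy, z, hz, rfl⟩ := Finset.mem_add.mp (support_mul g h hm)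
      have := ih hg y hy
      have := one_le_add_of_mem_span_X_pair hh z hz
      simp only [Finsupp.add_apply]
      omega
    · rcases Finset.mem_union.mp (support_add hm) with hm | hm
      exacts [hg m hm, hh m hm]

theorem monomial_mem_span_X_pair_pow (hab : a ≠ b) {m : σ →₀ ℕ} (hm : k ≤ m a + m b) (c : R) :
    monomial m c ∈ Ideal.span {X a, X b} ^ k := by
  have hsplit : monomial m c = monomial ((m.erase b).erase a) c * (X a ^ m a * X b ^ m b) := by
    conv_lhs => rw [← m.erase_add_single b, ← (m.erase b).erase_add_single a,
      Finsupp.erase_ne hab, monomial_add_single, monomial_add_single, mul_assoc]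
  have hXa : (X a : MvPolynomial σ R) ∈ Ideal.span {X a, X b} := Ideal.subset_span (by simp)
  have hXb : (X b : MvPolynomial σ R) ∈ Ideal.span {X a, X b} := Ideal.subset_span (by simp)
  rw [hsplit]
  refine Ideal.mul_mem_left _ _ (Ideal.pow_le_pow_right hm ?_)
  rw [pow_add]
  exact Ideal.mul_mem_mul (Ideal.pow_mem_pow hXa _) (Ideal.pow_mem_pow hXb _)

theorem mem_span_X_pair_pow_iff (hab : a ≠ b) :
    f ∈ Ideal.span {X a, X b} ^ k ↔ ∀ m ∈ f.support, k ≤ m a + m b := by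
  refine ⟨le_add_of_mem_span_X_pair_pow, fun hf => ?_⟩
  rw [← support_sum_monomial_coeff f]
  exact Ideal.sum_mem _ fun m hm => monomial_mem_span_X_pair_pow hab (hf m hm) _

theorem support_mul_monomial_one (u : σ →₀ ℕ) :
    (f * monomial u 1).support = f.support.map (addRightEmbedding u) :=
  AddMonoidAlgebra.support_coeff_mul_single f 1 (by simp) u

theorem mul_monomial_mem_span_X_pair_pow_iff (hab : a ≠ b) (u : σ →₀ ℕ) :
    f * monomial u 1 ∈ Ideal.span {X a, X b} ^ k ↔
      f ∈ Ideal.span {X a, X b} ^ (k - (u a + u b)) := by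
  rw [mem_span_X_pair_pow_iff hab, mem_span_X_pair_pow_iff hab, support_mul_monomial_one,
    Finset.forall_mem_map]
  refine forall₂_congr fun m _ => ?_
  simp only [addRightEmbedding_apply, Finsupp.add_apply]
  omega

end MvPolynomial

theorem statement10_general {V : Type*} [Fintype V] (K : Type*) [Field K] (G : SimpleGraph V)
    (k : ℕ) :
    Submodule.colon (symbPow K G k) (Ideal.span {(∏ i : V, X i : MvPolynomial V K)}) =
      symbPow K G (k - 2) := by
  set u : V →₀ ℕ := ∑ i, Finsupp.single i 1
  have hu : ∀ i, u i = 1 := fun i => by simp [u]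
  have hv : (∏ i : V, X i : MvPolynomial V K) = monomial u 1 := (monomial_sum_one _ _).symm
  ext f
  rw [← Ideal.submodule_span_eq, Submodule.mem_colon_span_singleton, smul_eq_mul, hv]
  simp only [symbPow, Ideal.mem_iInf]
  refine forall₂_congr fun p hp => ?_
  rw [mul_monomial_mem_span_X_pair_pow_iff hp.ne, hu, hu]

/-- Lemma 3.4 of [s6]: with `v = x_1 ⋯ x_n` the product of all the
variables, `(J(G)^{(k)} : v) = J(G)^{(k-2)}` for every `k ≥ 2` (with `J(G)^{(0)} = S`). -/
theorem statement10 {V : Type*} [Fintype V] (K : Type*) [Field K] (G : SimpleGraph V)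
    (k : ℕ) (hk : 2 ≤ k) :
    Submodule.colon (symbPow K G k) (Ideal.span {(∏ i : V, X i : MvPolynomial V K)}) =
      symbPow K G (k - 2) :=
  statement10_general K G k
end

section
/- For every finite simple graph G without isolated vertices and every integer k ≥ 1, deg(J(G)^{(k)}) ≥ k · deg(J(G)). -/
open MvPolynomial

/-!
A monomial `x^m` lies in `(x_a, x_b)^k` iff `m_a + m_b ≥ k`, as the substitution `x_a, x_b ↦ t`,
`x_v ↦ 1` otherwise, shows. Hence the minimal monomial generators of `J(G)^{(k)}` are the
exponent vectors `m` with `m_a + m_b ≥ k` on every edge such that every vertex in the support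
of `m` lies on an edge where equality holds. This description is stable under scaling by `k`,
so `k` times a generator of `J(G)` of maximal degree is a generator of `J(G)^{(k)}`; the
supremum defining `deg J(G)` is attained because all these degrees are at most `k |V|`.
-/

theorem Nat.mul_sSup_le_sSup {S T : Set ℕ} (k : ℕ) (hS : BddAbove S) (hT : BddAbove T)
    (h : ∀ d ∈ S, k * d ∈ T) : k * sSup S ≤ sSup T := by
  rcases S.eq_empty_or_nonempty with rfl | hne
  · simp
  · exact le_csSup hT (h _ (Nat.sSup_mem hne hS))

theorem aeval_X_pow_monomial_one {σ R : Type*} [CommSemiring R] (w : σ → ℕ) (m : σ →₀ ℕ) :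
    aeval (fun i => (Polynomial.X : Polynomial R) ^ w i) (monomial m (1 : R)) =
      Polynomial.X ^ m.weight w := by
  simp [aeval_monomial, Finsupp.prod, ← pow_mul, Finset.prod_pow_eq_pow_sum,
    Finsupp.weight_apply, Finsupp.sum, mul_comm]

theorem Finsupp.weight_single_one_add_single_one_apply {σ : Type*} [DecidableEq σ] (a b : σ)
    (m : σ →₀ ℕ) :
    m.weight (Pi.single a 1 + Pi.single b 1) = m a + m b := by
  rw [← Finsupp.weight_single_one_apply a m, ← Finsupp.weight_single_one_apply b m]
  simp only [Finsupp.weight_apply, Pi.add_apply, smul_add, Finsupp.sum_add]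

theorem Finsupp.single_add_single_le_self {σ : Type*} {a b : σ} (hab : a ≠ b) (m : σ →₀ ℕ) :
    Finsupp.single a (m a) + Finsupp.single b (m b) ≤ m := by
  classical
  intro v
  by_cases hva : v = a <;> by_cases hvb : v = b <;>
    simp_all [Finsupp.single_apply, eq_comm]

theorem monomial_one_mem_span_X_pair_pow_iff {σ R : Type*} [CommSemiring R] [Nontrivial R]
    {a b : σ} (hab : a ≠ b) (k : ℕ) (m : σ →₀ ℕ) :
    monomial m (1 : R) ∈ Ideal.span {X a, X b} ^ k ↔ k ≤ m a + m b := by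
  classical
  set I : Ideal (MvPolynomial σ R) := Ideal.span {X a, X b}
  constructor
  · intro hm
    obtain ⟨φ, hφa, hφb, hφm⟩ : ∃ φ : MvPolynomial σ R →ₐ[R] Polynomial R,
        φ (X a) = Polynomial.X ∧ φ (X b) = Polynomial.X ∧
          φ (monomial m 1) = Polynomial.X ^ (m a + m b) :=
      ⟨aeval fun i => Polynomial.X ^ (Pi.single a 1 + Pi.single b 1 : σ → ℕ) i,
        by simp [hab], by simp [hab.symm],
        by rw [aeval_X_pow_monomial_one, Finsupp.weight_single_one_add_single_one_apply]⟩
    have hI : I ≤ (Ideal.span {Polynomial.X}).comap φ := by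
      rw [Ideal.span_le]
      rintro _ (rfl | rfl) <;> simp [hφa, hφb]
    have := Ideal.le_comap_pow φ k (Ideal.pow_right_mono hI k hm)
    rw [Ideal.mem_comap, Ideal.span_singleton_pow, Ideal.mem_span_singleton, hφm,
      Polynomial.X_pow_dvd_iff] at this
    by_contra! hlt
    simpa using this _ hlt
  · intro hk
    have hXa : X a ^ m a ∈ I ^ m a := Ideal.pow_mem_pow (Ideal.subset_span (by simp)) _
    have hXb : X b ^ m b ∈ I ^ m b := Ideal.pow_mem_pow (Ideal.subset_span (by simp)) _
    have hXab : X a ^ m a * X b ^ m b ∈ I ^ (m a + m b) := pow_add I _ _ ▸ Ideal.mul_mem_mul hXa hXb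
    refine Ideal.pow_le_pow_right hk (Ideal.mem_of_dvd _ ?_ hXab)
    rw [X_pow_eq_monomial, X_pow_eq_monomial, monomial_mul, one_mul,
      monomial_one_dvd_monomial_one]
    exact Finsupp.single_add_single_le_self hab m

theorem monomial_one_mem_symbPow_iff {K : Type*} [Field K] {V : Type*} (G : SimpleGraph V)
    (k : ℕ) (m : V →₀ ℕ) :
    monomial m (1 : K) ∈ symbPow K G k ↔ ∀ a b, G.Adj a b → k ≤ m a + m b := by
  simp only [symbPow, Submodule.mem_iInf, Prod.forall]
  exact forall₃_congr fun a b hab => monomial_one_mem_span_X_pair_pow_iff hab.ne k m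

theorem coverIdeal_eq_symbPow_one (K : Type*) [Field K] {V : Type*} (G : SimpleGraph V) :
    coverIdeal K G = symbPow K G 1 := by
  simp [coverIdeal, symbPow]

theorem isMinGen_symbPow_iff {K : Type*} [Field K] {V : Type*} (G : SimpleGraph V)
    (k : ℕ) (m : V →₀ ℕ) :
    IsMinGen (symbPow K G k) m ↔
      (∀ a b, G.Adj a b → k ≤ m a + m b) ∧ ∀ i, m i ≠ 0 → ∃ j, G.Adj i j ∧ m i + m j = k := by
  classical
  simp only [IsMinGen, monomial_one_mem_symbPow_iff]
  refine and_congr_right fun hcov => forall₂_congr fun i hi => ?_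
  push Not
  simp only [Finsupp.tsub_apply, Finsupp.single_apply]
  constructor
  · rintro ⟨a, b, hab, hlt⟩
    have hab_cover := hcov a b hab
    by_cases hia : i = a
    · subst hia
      exact ⟨b, hab, by simp [hab.ne] at hlt; omega⟩
    · by_cases hib : i = b
      · subst hib
        exact ⟨a, hab.symm, by simp [hia] at hlt; omega⟩
      · simp [hia, hib] at hlt; omega
  · rintro ⟨j, hij, hsum⟩
    exact ⟨i, j, hij, by simp; omega⟩

theorem isMinGen_symbPow_nsmul {K : Type*} [Field K] {V : Type*} {G : SimpleGraph V}
    {m : V →₀ ℕ} (hm : IsMinGen (symbPow K G 1) m) (k : ℕ) :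
    IsMinGen (symbPow K G k) (k • m) := by
  rw [isMinGen_symbPow_iff] at hm ⊢
  obtain ⟨hcover, htight⟩ := hm
  refine ⟨fun a b hab => ?_, fun i hi => ?_⟩
  · simpa [mul_add] using Nat.mul_le_mul_left k (hcover a b hab)
  · obtain ⟨j, hij, hsum⟩ := htight i (right_ne_zero_of_mul hi)
    exact ⟨j, hij, by simp [← mul_add, hsum]⟩

theorem apply_le_of_isMinGen_symbPow {K : Type*} [Field K] {V : Type*} {G : SimpleGraph V}
    {k : ℕ} {m : V →₀ ℕ} (hm : IsMinGen (symbPow K G k) m) (v : V) : m v ≤ k := by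
  by_cases hv : m v = 0
  · simp [hv]
  · obtain ⟨j, -, hsum⟩ := ((isMinGen_symbPow_iff G k m).1 hm).2 v hv
    omega

theorem mdeg_nsmul {V : Type*} (k : ℕ) (m : V →₀ ℕ) : mdeg (k • m) = k * mdeg m :=
  map_nsmul Finsupp.degree k m

theorem mdeg_le_of_isMinGen_symbPow {K : Type*} [Field K] {V : Type*} [Fintype V]
    {G : SimpleGraph V} {k : ℕ} {m : V →₀ ℕ} (hm : IsMinGen (symbPow K G k) m) :
    mdeg m ≤ k * Fintype.card V :=
  calc mdeg m = ∑ v ∈ m.support, m v := rfl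
    _ ≤ m.support.card • k :=
        Finset.sum_le_card_nsmul _ _ _ fun v _ => apply_le_of_isMinGen_symbPow hm v
    _ ≤ k * Fintype.card V := by rw [smul_eq_mul, mul_comm]; gcongr; exact Finset.card_le_univ _

theorem bddAbove_mdeg_isMinGen_symbPow (K : Type*) [Field K] {V : Type*} [Fintype V]
    (G : SimpleGraph V) (k : ℕ) :
    BddAbove {d | ∃ m : V →₀ ℕ, IsMinGen (symbPow K G k) m ∧ mdeg m = d} :=
  ⟨k * Fintype.card V, by rintro _ ⟨m, hm, rfl⟩; exact mdeg_le_of_isMinGen_symbPow hm⟩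

theorem statement11_general {V : Type*} [Fintype V] (K : Type*) [Field K] (G : SimpleGraph V)
    (k : ℕ) :
    k * genDeg (coverIdeal K G) ≤ genDeg (symbPow K G k) := by
  rw [coverIdeal_eq_symbPow_one]
  refine Nat.mul_sSup_le_sSup k (bddAbove_mdeg_isMinGen_symbPow K G 1)
    (bddAbove_mdeg_isMinGen_symbPow K G k) ?_
  rintro _ ⟨m, hm, rfl⟩
  exact ⟨k • m, isMinGen_symbPow_nsmul hm k, mdeg_nsmul k m⟩

/-- Lemma 3.1 of [s7]: for every finite simple graph `G` without isolated
vertices and every `k ≥ 1`, `deg (J(G)^{(k)}) ≥ k * deg (J(G))`. -/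
theorem statement11 {V : Type*} [Fintype V] (K : Type*) [Field K] (G : SimpleGraph V)
    (hiso : HasNoIsolatedVertex G) (k : ℕ) (hk : 1 ≤ k) :
    k * genDeg (coverIdeal K G) ≤ genDeg (symbPow K G k) :=
  statement11_general K G k
end

section
/- Let G be a finite simple graph with vertex set {x_1, …, x_n} and, for an integer r ≥ 1, let G_r be the graph with vertex set {x_{i,p} : 1 ≤ i ≤ n, 1 ≤ p ≤ r} and edge set {{x_{i,p}, x_{j,q}} : {x_i, x_j} ∈ E(G) and p + q ≤ r + 1}. Fix an integer k ≥ 1 and set W = {x_{i, ⌊(k+1)/2⌋ + 1} : 1 ≤ i ≤ n} ⊆ V(G_{k+1}). Then the map φ sending x_{i,j} to x_{i,j} if 1 ≤ j ≤ ⌊(k+1)/2⌋ and to x_{i,j+1} if j ≥ ⌊(k+1)/2⌋ + 1 is a graph isomorphism from G_k onto the induced subgraph G_{k+1} \ W; in particular, G_k is isomorphic to an induced subgraph of G_{k+1}. -/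
open MvPolynomial

/-- The graph `G_r` associated to a graph `G` and an integer `r ≥ 1`: its vertices are the
pairs `x_{i,p}` with `x_i ∈ V(G)` and `1 ≤ p ≤ r` (here `p ∈ Fin r` is 0-indexed), and
`{x_{i,p}, x_{j,q}}` is an edge exactly when `{x_i, x_j} ∈ E(G)` and `p + q ≤ r + 1`
(0-indexed: `p + q + 1 ≤ r - 1 + 1`, i.e. `(p+1) + (q+1) ≤ r + 1`). -/
def layeredGraph {V : Type*} (G : SimpleGraph V) (r : ℕ) : SimpleGraph (V × Fin r) where
  Adj a b := G.Adj a.1 b.1 ∧ (a.2.val + 1) + (b.2.val + 1) ≤ r + 1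
  symm := ⟨fun a b h => ⟨h.1.symm, by omega⟩⟩
  loopless := ⟨fun a h => G.loopless.irrefl a.1 h.1⟩

/-- The deleted row `W`: with 0-indexed rows, `x_{i,⌊(k+1)/2⌋+1}` is `(i, (k + 1) / 2)`. -/
def middleRow (k : ℕ) : Fin (k + 1) := ⟨(k + 1) / 2, by omega⟩

/- Skipping the middle row preserves the constraint `p + q ≤ r + 1`: two rows before the middle
satisfy it in both graphs, two rows from the middle on satisfy it in neither, and a mixed pair
gains exactly one on each side. -/
lemma succAbove_middleRow_add_le_iff (k : ℕ) (i j : Fin k) :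
    ((middleRow k).succAbove i : ℕ) + 1 + (((middleRow k).succAbove j : ℕ) + 1) ≤ k + 1 + 1 ↔
      (i : ℕ) + 1 + ((j : ℕ) + 1) ≤ k + 1 := by
  simp only [Fin.succAbove, middleRow, Fin.lt_def, Fin.val_castSucc]
  split_ifs <;> simp only [Fin.val_castSucc, Fin.val_succ] <;> omega

def layeredGraphEmbedding {V : Type*} (G : SimpleGraph V) (k : ℕ) :
    layeredGraph G k ↪g layeredGraph G (k + 1) where
  toEmbedding := (Function.Embedding.refl V).prodMap (middleRow k).succAboveEmb
  map_rel_iff' {a b} := and_congr_right' (succAbove_middleRow_add_le_iff k a.2 b.2)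

lemma range_layeredGraphEmbedding {V : Type*} (G : SimpleGraph V) (k : ℕ) :
    Set.range (layeredGraphEmbedding G k) =
      {a : V × Fin (k + 1) | a.2.val = (k + 1) / 2}ᶜ := by
  ext ⟨v, j⟩
  simp [layeredGraphEmbedding, Fin.ext_iff, middleRow]

theorem statement12_general {V : Type*} (G : SimpleGraph V) (k : ℕ) :
    ∃ e : layeredGraph G k ≃g
        (layeredGraph G (k + 1)).induce ({a : V × Fin (k + 1) | a.2.val = (k + 1) / 2}ᶜ),
      ∀ a : V × Fin k, (e a : V × Fin (k + 1)) =
        (a.1, if a.2.val < (k + 1) / 2 then a.2.castSucc else a.2.succ) := by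
  refine ⟨(layeredGraphEmbedding G k).isoInduceRange.trans
    (SimpleGraph.Iso.refl.induce (range_layeredGraphEmbedding G k ▸ Set.bijOn_id _)), ?_⟩
  -- `Fin.succAbove` unfolds to exactly this case split.
  exact fun _ => rfl

/-- from the proof of Theorem `main2`: for `k ≥ 1`, the map `φ` sending
`x_{i,j}` to `x_{i,j}` for `1 ≤ j ≤ ⌊(k+1)/2⌋` and to `x_{i,j+1}` for `j ≥ ⌊(k+1)/2⌋ + 1`
is a graph isomorphism from `G_k` onto the induced subgraph of `G_{k+1}` obtained by deleting
`W = {x_{i,⌊(k+1)/2⌋+1} : 1 ≤ i ≤ n}`; in particular, `G_k` is isomorphic to an induced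
subgraph of `G_{k+1}`.  (In the 0-indexed formulation, `W` consists of the vertices whose
second coordinate equals `⌊(k+1)/2⌋`, and `φ (i, j) = (i, j)` for `j < ⌊(k+1)/2⌋` while
`φ (i, j) = (i, j+1)` otherwise.) -/
theorem statement12 {V : Type*} [Fintype V] (G : SimpleGraph V) (k : ℕ) (hk : 1 ≤ k) :
    ∃ e : layeredGraph G k ≃g
        (layeredGraph G (k + 1)).induce ({a : V × Fin (k + 1) | a.2.val = (k + 1) / 2}ᶜ),
      ∀ a : V × Fin k, (e a : V × Fin (k + 1)) =
        (a.1, if a.2.val < (k + 1) / 2 then a.2.castSucc else a.2.succ) :=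
  statement12_general G k
end

section
/- Let G be a very well-covered graph with vertices labeled V(G) = {x_1, …, x_h, y_1, …, y_h} so that: {x_1, …, x_h} is a minimal vertex cover, {y_1, …, y_h} is a maximal independent set, and {x_i, y_i} ∈ E(G) for each i. Fix an integer k ≥ 2 and let G_k be the graph with vertex set {x_{i,p}, y_{i,p} : 1 ≤ i ≤ h, 1 ≤ p ≤ k} and edge set {{x_{i,p}, x_{j,q}} : {x_i,x_j} ∈ E(G), p + q ≤ k + 1} ∪ {{x_{i,p}, y_{j,q}} : {x_i,y_j} ∈ E(G), p + q ≤ k + 1}. Set F = {y_{i,j} : 1 ≤ i ≤ h, 2 ≤ j ≤ k}. Then: (a) F is an independent set of G_k; (b) N_{G_k}[F] = F ∪ {x_{i,j} : 1 ≤ i ≤ h, 1 ≤ j ≤ k-1}; (c) the induced subgraph G_k \ N_{G_k}[F] is isomorphic to the bipartite graph G' with vertex set V(G) and edge set {{x_i, y_j} : 1 ≤ i, j ≤ h, {x_i, y_j} ∈ E(G)}. -/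
open MvPolynomial

/-- The graph `G_k` associated to a graph `G` on `{x_1,…,x_h, y_1,…,y_h}` (vertex type
`Fin h ⊕ Fin h`, with `x_i = Sum.inl i` and `y_i = Sum.inr i`): its vertices are the pairs
`x_{i,p}, y_{i,p}` with `1 ≤ i ≤ h`, `1 ≤ p ≤ k` (here `p ∈ Fin k` is 0-indexed), and its
edges are `{x_{i,p}, x_{j,q}}` for `{x_i,x_j} ∈ E(G)`, `p + q ≤ k + 1`, together with
`{x_{i,p}, y_{j,q}}` for `{x_i,y_j} ∈ E(G)`, `p + q ≤ k + 1` (so at least one endpoint lies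
in the `x`-part). -/
def wellCoveredLayered (h : ℕ) (G : SimpleGraph (Fin h ⊕ Fin h)) (k : ℕ) :
    SimpleGraph ((Fin h ⊕ Fin h) × Fin k) where
  Adj a b := G.Adj a.1 b.1 ∧ (a.2.val + 1) + (b.2.val + 1) ≤ k + 1 ∧
    (a.1.isLeft ∨ b.1.isLeft)
  symm := ⟨fun a b hab => ⟨hab.1.symm, by omega, hab.2.2.symm⟩⟩
  loopless := ⟨fun a hab => G.loopless.irrefl a.1 hab.1⟩

/-- The bipartite graph `G'` obtained from `G` by deleting the edges with both endpoints in
the `x`-part: its vertex set is `V(G)` and its edges are the edges `{x_i, y_j}` of `G`. -/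
def bipartitePart (h : ℕ) (G : SimpleGraph (Fin h ⊕ Fin h)) :
    SimpleGraph (Fin h ⊕ Fin h) where
  Adj a b := G.Adj a b ∧ ((a.isLeft ∧ b.isRight) ∨ (a.isRight ∧ b.isLeft))
  symm := ⟨fun a b hab => ⟨hab.1.symm, hab.2.symm.imp And.symm And.symm⟩⟩
  loopless := ⟨fun a hab => G.loopless.irrefl a hab.1⟩

theorem mem_closedNbhdSet_iff {V : Type*} {G : SimpleGraph V} {F : Set V} {b : V} :
    b ∈ closedNbhdSet G F ↔ b ∈ F ∨ ∃ a ∈ F, G.Adj a b := by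
  simp only [closedNbhdSet, Set.mem_iUnion, Set.mem_insert_iff, SimpleGraph.mem_neighborSet,
    exists_prop]
  constructor
  · rintro ⟨a, ha, rfl | hab⟩
    exacts [Or.inl ha, Or.inr ⟨a, ha, hab⟩]
  · rintro (hb | ⟨a, ha, hab⟩)
    exacts [⟨b, hb, Or.inl rfl⟩, ⟨a, ha, Or.inr hab⟩]

namespace wellCoveredLayered

variable {h : ℕ} {G : SimpleGraph (Fin h ⊕ Fin h)} {k : ℕ}

theorem isLeft_of_adj_of_isRight {a b : (Fin h ⊕ Fin h) × Fin k}
    (hab : (wellCoveredLayered h G k).Adj a b) (ha : a.1.isRight) : b.1.isLeft := by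
  obtain ⟨-, -, hl | hl⟩ := hab
  · obtain ⟨_ | _, _⟩ := a <;> simp_all
  · exact hl

theorem isIndepSet_of_forall_isRight {S : Set ((Fin h ⊕ Fin h) × Fin k)}
    (hS : ∀ a ∈ S, a.1.isRight) : IsIndepSet (wellCoveredLayered h G k) S := by
  intro a ha b hb hab
  have := isLeft_of_adj_of_isRight hab (hS a ha)
  obtain ⟨_ | _, _⟩ := b <;> simp_all

/-- Each `x_{i,p}` with `p ≤ k - 1` (1-indexed) is a neighbour of `y_{i,2}`, through the matching
edge `{x_i, y_i}`. -/
theorem closedNbhdSet_upper_y_layers (hmatch : ∀ i : Fin h, G.Adj (Sum.inl i) (Sum.inr i)) :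
    closedNbhdSet (wellCoveredLayered h G k) {a | a.1.isRight ∧ 1 ≤ a.2.val} =
      {a | a.1.isRight ∧ 1 ≤ a.2.val} ∪ {a | a.1.isLeft ∧ a.2.val + 1 ≤ k - 1} := by
  ext b
  rw [mem_closedNbhdSet_iff]
  constructor
  · rintro (hb | ⟨a, ⟨haR, ha1⟩, hab⟩)
    · exact Or.inl hb
    · exact Or.inr ⟨isLeft_of_adj_of_isRight hab haR, by have := hab.2.1; omega⟩
  · rintro (hb | ⟨hbL, hbk⟩)
    · exact Or.inl hb
    obtain ⟨i | i, p⟩ := b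
    · refine Or.inr ⟨(Sum.inr i, ⟨1, by omega⟩), ⟨rfl, le_rfl⟩, (hmatch i).symm, ?_, Or.inr rfl⟩
      simp only at hbk ⊢
      omega
    · simp at hbL

/-- The copy of `G'` inside `G_k`: `x_i ↦ x_{i,k}` and `y_i ↦ y_{i,1}` (1-indexed). -/
def topLayer (hk : 2 ≤ k) (v : Fin h ⊕ Fin h) : (Fin h ⊕ Fin h) × Fin k :=
  (v, Sum.elim (fun _ => ⟨k - 1, by omega⟩) (fun _ => ⟨0, by omega⟩) v)

/-- Two `x`-vertices `x_{i,k}, x_{j,k}` are never adjacent since `k + k > k + 1`, while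
`x_{i,k} y_{j,1}` is an edge exactly when `x_i y_j` is. -/
theorem adj_topLayer_iff (hk : 2 ≤ k) {v w : Fin h ⊕ Fin h} :
    (wellCoveredLayered h G k).Adj (topLayer hk v) (topLayer hk w) ↔
      (bipartitePart h G).Adj v w := by
  rcases v with i | i <;> rcases w with j | j <;>
    simp [topLayer, wellCoveredLayered, bipartitePart] <;> omega

def topLayerEmbedding (hk : 2 ≤ k) : bipartitePart h G ↪g wellCoveredLayered h G k where
  toFun := topLayer hk
  inj' _ _ hvw := congrArg Prod.fst hvw
  map_rel_iff' := adj_topLayer_iff hk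

@[simp]
theorem coe_topLayerEmbedding (hk : 2 ≤ k) :
    ⇑(topLayerEmbedding (G := G) hk) = topLayer hk := rfl

theorem range_topLayerEmbedding (hk : 2 ≤ k) :
    Set.range (topLayerEmbedding (G := G) hk) =
      ({a | a.1.isRight ∧ 1 ≤ a.2.val} ∪ {a | a.1.isLeft ∧ a.2.val + 1 ≤ k - 1})ᶜ := by
  ext ⟨v, p⟩
  have := p.isLt
  rcases v with i | i <;>
    simp [topLayer, Fin.ext_iff] <;> omega

end wellCoveredLayered

theorem statement13_general (h : ℕ) (G : SimpleGraph (Fin h ⊕ Fin h))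
    (hmatch : ∀ i : Fin h, G.Adj (Sum.inl i) (Sum.inr i))
    (k : ℕ) (hk : 2 ≤ k)
    (F : Set ((Fin h ⊕ Fin h) × Fin k))
    (hF : F = {a : (Fin h ⊕ Fin h) × Fin k | a.1.isRight ∧ 1 ≤ a.2.val}) :
    IsIndepSet (wellCoveredLayered h G k) F ∧
    closedNbhdSet (wellCoveredLayered h G k) F =
      F ∪ {a : (Fin h ⊕ Fin h) × Fin k | a.1.isLeft ∧ a.2.val + 1 ≤ k - 1} ∧
    Nonempty
      ((wellCoveredLayered h G k).induce
          ((closedNbhdSet (wellCoveredLayered h G k) F)ᶜ) ≃g bipartitePart h G) := by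
  subst hF
  have hN := wellCoveredLayered.closedNbhdSet_upper_y_layers (k := k) hmatch
  refine ⟨wellCoveredLayered.isIndepSet_of_forall_isRight fun a ha => ha.1, hN, ?_⟩
  rw [hN, ← wellCoveredLayered.range_topLayerEmbedding hk]
  exact ⟨(wellCoveredLayered.topLayerEmbedding hk).isoInduceRange.symm⟩

/-- from the proof of Proposition `linwell`: let `G` be a very
well-covered graph with vertices labeled `x_1,…,x_h, y_1,…,y_h` so that `{x_1,…,x_h}` is a
minimal vertex cover, `{y_1,…,y_h}` is a maximal independent set, and `{x_i,y_i} ∈ E(G)` for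
all `i`.  For `k ≥ 2`, let `G_k` be as above and set `F = {y_{i,j} : 1 ≤ i ≤ h, 2 ≤ j ≤ k}`
(0-indexed: second coordinate `≥ 1`).  Then (a) `F` is independent in `G_k`;
(b) `N_{G_k}[F] = F ∪ {x_{i,j} : 1 ≤ i ≤ h, 1 ≤ j ≤ k-1}` (0-indexed: second coordinate
`≤ k - 2`); and (c) `G_k \ N_{G_k}[F]` is isomorphic to the bipartite graph `G'`. -/
theorem statement13 (h : ℕ) (G : SimpleGraph (Fin h ⊕ Fin h)) (hvwc : VeryWellCovered G)
    (hcover : IsMinVertexCover G (Set.range Sum.inl))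
    (hindep : IsMaxIndepSet G (Set.range Sum.inr))
    (hmatch : ∀ i : Fin h, G.Adj (Sum.inl i) (Sum.inr i))
    (k : ℕ) (hk : 2 ≤ k)
    (F : Set ((Fin h ⊕ Fin h) × Fin k))
    (hF : F = {a : (Fin h ⊕ Fin h) × Fin k | a.1.isRight ∧ 1 ≤ a.2.val}) :
    IsIndepSet (wellCoveredLayered h G k) F ∧
    closedNbhdSet (wellCoveredLayered h G k) F =
      F ∪ {a : (Fin h ⊕ Fin h) × Fin k | a.1.isLeft ∧ a.2.val + 1 ≤ k - 1} ∧
    Nonempty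
      ((wellCoveredLayered h G k).induce
          ((closedNbhdSet (wellCoveredLayered h G k) F)ᶜ) ≃g bipartitePart h G) :=
  statement13_general h G hmatch k hk F hF
end

section
/- Let G be a finite simple graph, let x be a vertex of G, and let C be a minimal vertex cover of the induced subgraph G \ N_G[x]. Then C ∪ N_G(x) is a minimal vertex cover of G. Consequently, deg(J(G \ N_G[x])) + |N_G(x)| ≤ deg(J(G)), where deg of the unit ideal (arising when G \ N_G[x] has no edges) is taken to be 0. -/
open MvPolynomial

/-!
Every edge of `G` meets `N_G[x]` or is an edge of `G \ N_G[x]`, so `C ∪ N_G(x)` covers `G`. It is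
minimal: dropping a neighbour `v` of `x` uncovers the edge `xv` (as `x ∉ C`), and dropping `v ∈ C`
uncovers an edge of `G \ N_G[x]`, whose ends lie outside `N_G(x)`.

The minimal monomial generators of `J(H)` are exactly the squarefree monomials supported on minimal
vertex covers of `H`, so `deg J(H)` is the largest size of a minimal vertex cover of `H`. Applying
the first part to a largest minimal vertex cover of `G \ N_G[x]`, which is disjoint from `N_G(x)`,
gives the inequality.
-/

section

variable {V : Type*}

theorem IsVertexCover.mono {G : SimpleGraph V} {C D : Set V} (hC : IsVertexCover G C)
    (h : C ⊆ D) : IsVertexCover G D :=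
  fun _ _ hab => (hC hab).imp (@h _) (@h _)

theorem isMinVertexCover_iff {G : SimpleGraph V} {C : Set V} :
    IsMinVertexCover G C ↔ IsVertexCover G C ∧ ∀ v ∈ C, ¬ IsVertexCover G (C \ {v}) := by
  refine and_congr_right fun _ => ⟨fun h v hv => h _ (Set.sdiff_singleton_ssubset.2 hv), ?_⟩
  intro h D hDC hD
  obtain ⟨v, hvC, hDv⟩ := Set.ssubset_iff_sdiff_singleton.1 hDC
  exact h v hvC (hD.mono hDv)

theorem IsMinVertexCover.disjoint_of_deleteVerts {G : SimpleGraph V} {A C : Set V}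
    (hC : IsMinVertexCover (deleteVerts G A) C) : Disjoint C A := by
  refine Set.disjoint_left.2 fun v hvC hvA => (isMinVertexCover_iff.1 hC).2 v hvC ?_
  intro a b hab
  have hav : a ≠ v := fun h => hab.2.1 (h ▸ hvA)
  have hbv : b ≠ v := fun h => hab.2.2 (h ▸ hvA)
  exact (hC.1 hab).imp (⟨·, hav⟩) (⟨·, hbv⟩)

theorem IsMinVertexCover.union_neighborSet {G : SimpleGraph V} {x : V} {C : Set V}
    (hC : IsMinVertexCover (deleteVerts G (insert x (G.neighborSet x))) C) :
    IsMinVertexCover G (C ∪ G.neighborSet x) := by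
  have hxC : x ∉ C := fun hx =>
    Set.disjoint_left.1 hC.disjoint_of_deleteVerts hx (Set.mem_insert x _)
  rw [isMinVertexCover_iff]
  refine ⟨fun a b hab => ?_, fun v hv hcov => ?_⟩
  · by_cases ha : a ∈ insert x (G.neighborSet x)
    · rcases ha with rfl | ha
      · exact Or.inr (Or.inr hab)
      · exact Or.inl (Or.inr ha)
    by_cases hb : b ∈ insert x (G.neighborSet x)
    · rcases hb with rfl | hb
      · exact Or.inl (Or.inr hab.symm)
      · exact Or.inr (Or.inr hb)
    exact (hC.1 ⟨hab, ha, hb⟩).imp Or.inl Or.inl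
  rcases hv with hvC | hvN
  · refine (isMinVertexCover_iff.1 hC).2 v hvC fun a b hab => ?_
    have mem_C : ∀ {c}, c ∉ insert x (G.neighborSet x) →
        c ∈ (C ∪ G.neighborSet x) \ {v} → c ∈ C \ {v} := by
      rintro c hc ⟨hcC | hcN, hcv⟩
      exacts [⟨hcC, hcv⟩, absurd (Or.inr hcN) hc]
    exact (hcov hab.1).imp (mem_C hab.2.1) (mem_C hab.2.2)
  · rcases hcov hvN with ⟨hx | hx, -⟩ | ⟨-, hvv⟩
    · exact hxC hx
    · exact G.loopless.irrefl x hx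
    · exact hvv rfl

namespace Finsupp

theorem support_tsub_single_one_of_one_lt {m : V →₀ ℕ} {i : V} (h : 1 < m i) :
    (m - single i 1).support = m.support := by
  ext j
  rcases eq_or_ne j i with rfl | hj
  · simp only [mem_support_iff, tsub_apply, single_eq_same]
    omega
  · simp [hj]

theorem support_tsub_single_one_subset {m : V →₀ ℕ} {i : V} (h : m i ≤ 1) :
    ((m - single i 1).support : Set V) ⊆ ↑m.support \ {i} := by
  intro j hj
  rcases eq_or_ne j i with rfl | hj'
  · simp only [Finset.mem_coe, mem_support_iff, tsub_apply, single_eq_same] at hj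
    omega
  · simp_all

theorem sdiff_singleton_subset_support_tsub_single_one (m : V →₀ ℕ) (i : V) :
    ↑m.support \ {i} ⊆ ((m - single i 1).support : Set V) := by
  rintro j ⟨hj, hji⟩
  simp_all

end Finsupp

section CoverIdeal

open Finsupp

variable {K : Type*} [Field K]

theorem monomial_one_mem_span_X_pair {m : V →₀ ℕ} {a b : V} :
    monomial m (1 : K) ∈ Ideal.span {X a, X b} ↔ a ∈ m.support ∨ b ∈ m.support := by
  classical
  rw [← Set.image_pair, mem_ideal_span_X_image, support_monomial, if_neg one_ne_zero]
  simp

theorem monomial_one_mem_coverIdeal_iff {H : SimpleGraph V} {m : V →₀ ℕ} :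
    monomial m (1 : K) ∈ coverIdeal K H ↔ IsVertexCover H (m.support : Set V) := by
  simp only [coverIdeal, Ideal.mem_iInf, monomial_one_mem_span_X_pair]
  exact ⟨fun h a b hab => h (a, b) hab, fun h p hp => h hp⟩

theorem isMinGen_coverIdeal_iff {H : SimpleGraph V} {m : V →₀ ℕ} :
    IsMinGen (coverIdeal K H) m ↔ (∀ i, m i ≤ 1) ∧ IsMinVertexCover H (m.support : Set V) := by
  simp only [IsMinGen, monomial_one_mem_coverIdeal_iff, isMinVertexCover_iff]
  constructor
  · rintro ⟨hcov, hmin⟩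
    have hle : ∀ i, m i ≤ 1 := fun i => by
      by_contra! h
      exact hmin i (by omega) (by rwa [support_tsub_single_one_of_one_lt h])
    exact ⟨hle, hcov, fun i hi hcov' => hmin i (Finsupp.mem_support_iff.1 hi)
      (hcov'.mono (sdiff_singleton_subset_support_tsub_single_one m i))⟩
  · rintro ⟨hle, hcov, hmin⟩
    exact ⟨hcov, fun i hi hcov' => hmin i (Finsupp.mem_support_iff.2 hi)
      (hcov'.mono (support_tsub_single_one_subset (hle i)))⟩

theorem mdeg_eq_card_support {m : V →₀ ℕ} (h : ∀ i, m i ≤ 1) : mdeg m = m.support.card := by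
  rw [Finset.card_eq_sum_ones]
  exact Finset.sum_congr rfl fun i hi =>
    le_antisymm (h i) (Nat.one_le_iff_ne_zero.2 (Finsupp.mem_support_iff.1 hi))

theorem exists_support_eq_of_le_one (s : Finset V) :
    ∃ m : V →₀ ℕ, (∀ i, m i ≤ 1) ∧ m.support = s := by
  classical
  exact ⟨Multiset.toFinsupp s.val, fun i => Multiset.nodup_iff_count_le_one.1 s.nodup i,
    Finset.val_toFinset s⟩

theorem genDeg_coverIdeal [Finite V] (H : SimpleGraph V) :
    genDeg (coverIdeal K H) = sSup {n | ∃ C, IsMinVertexCover H C ∧ C.ncard = n} := by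
  unfold genDeg
  congr 1
  ext n
  simp only [Set.mem_ofPred_eq, isMinGen_coverIdeal_iff]
  constructor
  · rintro ⟨m, ⟨hle, hC⟩, rfl⟩
    exact ⟨_, hC, by rw [Set.ncard_coe_finset, mdeg_eq_card_support hle]⟩
  · rintro ⟨C, hC, rfl⟩
    obtain ⟨s, rfl⟩ := C.toFinite.exists_finset_coe
    obtain ⟨m, hle, rfl⟩ := exists_support_eq_of_le_one s
    exact ⟨m, ⟨hle, hC⟩, by rw [Set.ncard_coe_finset, mdeg_eq_card_support hle]⟩

theorem bddAbove_ncard_isMinVertexCover [Finite V] (H : SimpleGraph V) :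
    BddAbove {n | ∃ C, IsMinVertexCover H C ∧ C.ncard = n} :=
  ⟨Nat.card V, by rintro _ ⟨C, -, rfl⟩; exact C.ncard_le_card⟩

theorem IsMinVertexCover.ncard_le_genDeg [Finite V] {H : SimpleGraph V} {C : Set V}
    (hC : IsMinVertexCover H C) : C.ncard ≤ genDeg (coverIdeal K H) := by
  rw [genDeg_coverIdeal]
  exact le_csSup (bddAbove_ncard_isMinVertexCover H) ⟨C, hC, rfl⟩

theorem exists_isMinVertexCover_ncard_eq_genDeg [Finite V] {H : SimpleGraph V}
    (h : ∃ C, IsMinVertexCover H C) :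
    ∃ C, IsMinVertexCover H C ∧ C.ncard = genDeg (coverIdeal K H) := by
  obtain ⟨C, hC⟩ := h
  rw [genDeg_coverIdeal]
  exact Nat.sSup_mem (s := {n | ∃ C, IsMinVertexCover H C ∧ C.ncard = n}) ⟨_, C, hC, rfl⟩
    (bddAbove_ncard_isMinVertexCover H)

end CoverIdeal

end

/-- from the proof of Theorem `deg`: if `C` is a minimal vertex cover of
`G \ N_G[x]`, then `C ∪ N_G(x)` is a minimal vertex cover of `G`; consequently
`deg (J(G \ N_G[x])) + |N_G(x)| ≤ deg (J(G))` (where `deg` of the unit ideal is `0`). -/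
theorem statement14 {V : Type*} [Fintype V] (K : Type*) [Field K] (G : SimpleGraph V)
    (x : V) (C : Set V)
    (hC : IsMinVertexCover (deleteVerts G (insert x (G.neighborSet x))) C) :
    IsMinVertexCover G (C ∪ G.neighborSet x) ∧
    genDeg (coverIdeal K (deleteVerts G (insert x (G.neighborSet x)))) +
        (G.neighborSet x).ncard ≤
      genDeg (coverIdeal K G) := by
  refine ⟨hC.union_neighborSet, ?_⟩
  obtain ⟨C', hC', hdeg⟩ := exists_isMinVertexCover_ncard_eq_genDeg (K := K) ⟨C, hC⟩
  have hdisj : Disjoint C' (G.neighborSet x) :=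
    hC'.disjoint_of_deleteVerts.mono_right (Set.subset_insert x _)
  rw [← hdeg, ← Set.ncard_union_eq hdisj]
  exact hC'.union_neighborSet.ncard_le_genDeg
end
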